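/- arXiv:2502.19084 — 2 statements merged into one kernel-verified Lean document; each statement's English description precedes it below -/
import Mathlib

section
/- Let F be a finite field and G a subgroup of GL_2(F). If G contains a subgroup of order #F and G acts irreducibly on F^2, then G contains SL_2(F). -/
/-!
A subgroup `H` of order `q = #F` is a `p`-group, so besides `0` it fixes some vector `v ≠ 0` of
`F²` (a set of `p`-power size). Its elements have determinant `1`, because `x ^ q = x` in `F`, so
in a basis `(v, w)` they are upper unitriangular and `h ↦ h₀₁` embeds `H` into `F`; by counting,
`H` consists of all upper transvections. Irreducibility gives `g₀ ∈ G` with `w := g₀ v ∉ F v`; in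
the basis `(v, w)`, conjugating the upper transvections by `g₀` gives all lower ones, and upper
and lower transvections generate `SL₂(F)`.
-/

open Matrix

theorem IsPGroup.exists_ne_zero_mem_fixedPoints {p : ℕ} [Fact p.Prime] {G V : Type*} [Group G]
    [AddMonoid V] [DistribMulAction G V] [Finite V] (hG : IsPGroup p G) (hV : p ∣ Nat.card V) :
    ∃ v : V, v ≠ 0 ∧ v ∈ MulAction.fixedPoints G V := by
  obtain ⟨v, hv, h0v⟩ :=
    hG.exists_fixed_point_of_prime_dvd_card_of_fixed_point V hV (a := 0) (smul_zero ·)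
  exact ⟨v, h0v.symm, hv⟩

namespace Matrix.GeneralLinearGroup

variable {n K : Type*} [Fintype n] [DecidableEq n] [Field K]

theorem det_eq_one_of_pow_card_eq_one [Fintype K] {g : GL n K} (hg : g ^ Fintype.card K = 1) :
    (g : Matrix n n K).det = 1 := by
  rw [← FiniteField.pow_card (g : Matrix n n K).det, ← det_pow, ← Units.val_pow_eq_pow_val, hg,
    Units.val_one, det_one]

theorem exists_smul_single_eq {b : n → n → K} (hb : LinearIndependent K b) :
    ∃ P : GL n K, ∀ j, P • Pi.single j (1 : K) = b j := by
  have hunit : IsUnit (Matrix.of b)ᵀ := linearIndependent_cols_iff_isUnit.mp hb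
  exact ⟨hunit.unit, fun j => mulVec_single_one _ j⟩

def lowerLeft (x : K) : GL (Fin 2) K :=
  ⟨!![1, 0; x, 1], !![1, 0; -x, 1], by simp [one_fin_two], by simp [one_fin_two]⟩

theorem eq_upperRightHom_of_smul_single_zero {g : GL (Fin 2) K}
    (hg : g • (Pi.single 0 1 : Fin 2 → K) = Pi.single 0 1)
    (hdet : (g : Matrix (Fin 2) (Fin 2) K).det = 1) :
    g = upperRightHom (g 0 1) := by
  have h00 : g 0 0 = 1 := by simpa using congrFun hg 0
  have h10 : g 1 0 = 0 := by simpa using congrFun hg 1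
  have h11 : g 1 1 = 1 := by simpa [det_fin_two, h00, h10] using hdet
  ext i j
  fin_cases i <;> fin_cases j <;> simp [h00, h10, h11]

theorem upperRightHom_mem_of_card_eq [Fintype K] {H : Subgroup (GL (Fin 2) K)}
    (hcard : Nat.card H = Fintype.card K)
    (hfix : ∀ h ∈ H, h • (Pi.single 0 1 : Fin 2 → K) = Pi.single 0 1) (x : K) :
    upperRightHom x ∈ H := by
  have hupper (h : H) : (h : GL (Fin 2) K) = upperRightHom ((h : GL (Fin 2) K) 0 1) :=
    eq_upperRightHom_of_smul_single_zero (hfix h h.2) <| det_eq_one_of_pow_card_eq_one <| by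
      rw [← hcard, ← Subgroup.coe_pow, pow_card_eq_one', Subgroup.coe_one]
  have hinj : Function.Injective fun h : H => (h : GL (Fin 2) K) 0 1 := fun h h' hhh' =>
    Subtype.ext <| (hupper h).trans <| (congrArg upperRightHom hhh').trans (hupper h').symm
  obtain ⟨h, rfl⟩ := (hinj.bijective_of_nat_card_le (by simp [hcard])).2 x
  exact hupper h ▸ h.2

theorem lowerLeft_eq_conj_upperRightHom {a : GL (Fin 2) K}
    (ha : a • (Pi.single 0 1 : Fin 2 → K) = Pi.single 1 1) (x : K) :
    lowerLeft x = a * upperRightHom (x * a 0 1) * a⁻¹ := by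
  have h00 : a 0 0 = 0 := by simpa using congrFun ha 0
  have h10 : a 1 0 = 1 := by simpa using congrFun ha 1
  rw [eq_mul_inv_iff_mul_eq]
  ext i j
  fin_cases i <;> fin_cases j <;> simp [lowerLeft, h00, h10, mul_apply, Fin.sum_univ_two]

theorem eq_upperRightHom_mul_lowerLeft_mul_upperRightHom {g : GL (Fin 2) K}
    (hdet : (g : Matrix (Fin 2) (Fin 2) K).det = 1) (hc : g 1 0 ≠ 0) :
    g = upperRightHom ((g 0 0 - 1) / g 1 0) * lowerLeft (g 1 0) *
      upperRightHom ((g 1 1 - 1) / g 1 0) := by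
  have hb : g 0 1 = (g 0 0 * g 1 1 - 1) / g 1 0 := by
    rw [eq_div_iff hc, ← hdet, det_fin_two]
    ring
  ext i j
  fin_cases i <;> fin_cases j <;>
    simp [lowerLeft, mul_apply, Fin.sum_univ_two, hb] <;> field_simp <;> ring

theorem mem_of_det_eq_one {G : Subgroup (GL (Fin 2) K)} (hU : ∀ x, upperRightHom x ∈ G)
    (hL : ∀ x, lowerLeft x ∈ G) {g : GL (Fin 2) K}
    (hdet : (g : Matrix (Fin 2) (Fin 2) K).det = 1) : g ∈ G := by
  have hmem {g : GL (Fin 2) K} (hdet : (g : Matrix (Fin 2) (Fin 2) K).det = 1) (hc : g 1 0 ≠ 0) :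
      g ∈ G := by
    rw [eq_upperRightHom_mul_lowerLeft_mul_upperRightHom hdet hc]
    exact G.mul_mem (G.mul_mem (hU _) (hL _)) (hU _)
  by_cases hc : g 1 0 = 0
  · have hd : g 1 1 ≠ 0 := by
      intro hd
      simp [det_fin_two, hc, hd] at hdet
    have hgL : g * lowerLeft 1 ∈ G := hmem (by simp [hdet, lowerLeft]) (by
      simpa [lowerLeft, mul_apply, Fin.sum_univ_two, hc] using hd)
    simpa using G.mul_mem hgL (G.inv_mem (hL 1))
  · exact hmem hdet hc

theorem mem_of_det_eq_one_of_smul_single_zero [Fintype K] {G H : Subgroup (GL (Fin 2) K)}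
    (hHG : H ≤ G) (hcard : Nat.card H = Fintype.card K)
    (hfix : ∀ h ∈ H, h • (Pi.single 0 1 : Fin 2 → K) = Pi.single 0 1) {a : GL (Fin 2) K}
    (haG : a ∈ G) (ha : a • (Pi.single 0 1 : Fin 2 → K) = Pi.single 1 1) {g : GL (Fin 2) K}
    (hdet : (g : Matrix (Fin 2) (Fin 2) K).det = 1) : g ∈ G := by
  have hU (x : K) : upperRightHom x ∈ G := hHG (upperRightHom_mem_of_card_eq hcard hfix x)
  refine mem_of_det_eq_one hU (fun x => ?_) hdet
  rw [lowerLeft_eq_conj_upperRightHom ha]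
  exact G.mul_mem (G.mul_mem haG (hU _)) (G.inv_mem haG)

theorem mem_of_det_eq_one_of_card_eq [Fintype K] {G H : Subgroup (GL (Fin 2) K)} (hHG : H ≤ G)
    (hcard : Nat.card H = Fintype.card K) {v : Fin 2 → K} (hvH : ∀ h ∈ H, h • v = v)
    {g₀ : GL (Fin 2) K} (hg₀G : g₀ ∈ G) (hv : LinearIndependent K ![v, g₀ • v])
    {g : GL (Fin 2) K} (hdet : (g : Matrix (Fin 2) (Fin 2) K).det = 1) : g ∈ G := by
  obtain ⟨P, hP⟩ := exists_smul_single_eq hv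
  have hPv : P • Pi.single 0 1 = v := hP 0
  have hPw : P • Pi.single 1 1 = g₀ • v := hP 1
  let φ := (MulAut.conj P⁻¹).toMonoidHom
  have hφ (x : GL (Fin 2) K) (u : Fin 2 → K) : φ x • u = P⁻¹ • x • P • u := by
    simp [φ, mul_smul]
  have hφdet : (φ g : Matrix (Fin 2) (Fin 2) K).det = 1 := by
    simp only [φ, MulEquiv.coe_toMonoidHom, MulAut.conj_apply, inv_inv, Units.val_mul]
    rwa [det_units_conj' P]
  have hφg : φ g ∈ G.map φ := by
    refine mem_of_det_eq_one_of_smul_single_zero (Subgroup.map_mono hHG)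
      (by rw [Subgroup.card_map_of_injective (MulEquiv.injective _), hcard]) ?_
      (Subgroup.mem_map_of_mem φ hg₀G) ?_ hφdet
    · rintro _ ⟨h, hh, rfl⟩
      rw [hφ, hPv, hvH h hh, ← hPv, inv_smul_smul]
    · rw [hφ, hPv, ← hPw, inv_smul_smul]
  exact (Subgroup.mem_map_iff_mem (MulEquiv.injective _)).mp hφg

theorem exists_mem_forall_smul_ne_of_not_invariant {G : Subgroup (GL n K)} {v : n → K}
    (h : ¬ ∀ g ∈ G, ∀ u ∈ K ∙ v, (g : Matrix n n K) *ᵥ u ∈ K ∙ v) :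
    ∃ g ∈ G, ∀ c : K, c • v ≠ g • v := by
  push Not at h
  obtain ⟨g, hgG, u, hu, hgu⟩ := h
  obtain ⟨c, rfl⟩ := Submodule.mem_span_singleton.mp hu
  refine ⟨g, hgG, fun c' hc' => hgu ?_⟩
  rw [mulVec_smul]
  exact Submodule.smul_mem _ c (Submodule.mem_span_singleton.mpr ⟨c', hc'⟩)

end Matrix.GeneralLinearGroup

/-- Let `F` be a finite field and `G` a subgroup of `GL₂(F)`. If `G` contains a subgroup
of order `#F` and `G` acts irreducibly on `F²`, then `G` contains `SL₂(F)`. -/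
theorem stmt_0 (F : Type*) [Field F] [Fintype F]
    (G : Subgroup (GL (Fin 2) F))
    (hord : ∃ H : Subgroup (GL (Fin 2) F), H ≤ G ∧ Nat.card H = Fintype.card F)
    (hirr : ∀ W : Submodule F (Fin 2 → F), Module.finrank F W = 1 →
      ¬ (∀ g ∈ G, ∀ v ∈ W, (g : Matrix (Fin 2) (Fin 2) F).mulVec v ∈ W)) :
    ∀ g : GL (Fin 2) F, (g : Matrix (Fin 2) (Fin 2) F).det = 1 → g ∈ G := by
  obtain ⟨H, hHG, hcard⟩ := hord
  obtain ⟨n, hp, hq⟩ := FiniteField.card F (ringChar F)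
  have : Fact (ringChar F).Prime := ⟨hp⟩
  obtain ⟨v, hv0, hvH⟩ := (IsPGroup.of_card (hcard.trans hq)).exists_ne_zero_mem_fixedPoints
    (V := Fin 2 → F) (by simp [hq, ← pow_mul])
  obtain ⟨g₀, hg₀G, hg₀v⟩ := GeneralLinearGroup.exists_mem_forall_smul_ne_of_not_invariant
    (hirr _ (finrank_span_singleton hv0))
  intro g hg
  exact GeneralLinearGroup.mem_of_det_eq_one_of_card_eq hHG hcard (fun h hh => hvH ⟨h, hh⟩) hg₀G
    (LinearIndependent.pair_symm_iff.mpr (linearIndependent_fin2.mpr ⟨hv0, hg₀v⟩)) hg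
end

section
/- Let A = 𝔽_q[T] and 𝔭 a maximal ideal of A generated by a monic irreducible polynomial of degree n. Let A_𝔭 be the 𝔭-adic completion of A. Let H be a closed subgroup of GL_2(A_𝔭) such that (i) the reduction of H modulo 𝔭 equals GL_2(A/𝔭), (ii) det(H) = A_𝔭^×, and (iii) the image of H ∩ (Id + 𝔭·M_2(A_𝔭)) in (Id + 𝔭·M_2(A_𝔭))/(Id + 𝔭²·M_2(A_𝔭)) contains a non-scalar element. If q ≥ 4, then H = GL_2(A_𝔭). -/
/-!
Write `Gⁱ` for the matrices congruent to `1` modulo `Xⁱ`. For `i ≥ 1`, `1 + Xⁱ P ↦ P mod X`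
identifies `Gⁱ/Gⁱ⁺¹` with `M₂(k)`; the image of `K ∩ Gⁱ` is an additive group `K^[i]`.
Conjugating by a lift of `y ∈ GL₂(k)` acts on it as conjugation by `y`, and the commutator of
elements of levels `i` and `j` has level `i + j`, with image the Lie bracket. Over a field with at
least three elements, an additive `GL₂(k)`-stable subgroup of `M₂(k)` containing a non-scalar
matrix contains `sl₂(k)`.

Let `K = H ∩ SL₂`. As `SL₂(k)` is perfect for `#k ≥ 4`, already `[H, H] ⊆ K` maps onto `SL₂(k)`.
The non-scalar element puts `sl₂(k)` into `H^[1]`, and commuting `E₁₂` with a lift of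
`diag(u, 1)` gives a non-scalar element of `K^[1]`, so `sl₂(k) ⊆ K^[1]`. Whenever
`sl₂(k) ⊆ K^[i]`, `SL₂ ⊆ K·Gⁱ` improves to `SL₂ ⊆ K·Gⁱ⁺¹`, since elements of `SL₂ ∩ Gⁱ` have
traceless image. With `det H = k⟦X⟧ˣ` this yields `H^[1] = M₂(k)`, and `[E₁₂, E₁₁] = -E₁₂`
carries `sl₂(k) ⊆ K^[i]` to level `i + 1` (brackets inside `sl₂(k)` are scalar in characteristic
`2`). Hence `H·Gⁱ = GL₂` for all `i`, and `H`, being closed, is everything.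
-/

open Matrix PowerSeries
open scoped commutatorElement

lemma exists_notMem_of_card_lt {k : Type*} [Fintype k] (s : Finset k)
    (hs : s.card < Fintype.card k) : ∃ a, a ∉ s := by
  obtain ⟨a, -, ha⟩ := Finset.exists_mem_notMem_of_card_lt_card (t := Finset.univ) hs
  exact ⟨a, ha⟩

lemma exists_eq_smul_of_forall_dvd {m n R : Type*} [CommRing R] {x : R} {M : Matrix m n R}
    (h : ∀ a b, x ∣ M a b) : ∃ P : Matrix m n R, M = x • P := by
  choose P hP using h
  exact ⟨Matrix.of P, Matrix.ext hP⟩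

section Congruence

variable {n R : Type*} [Fintype n] [DecidableEq n] [CommRing R] {x y : R} {g h : GL n R}

def congruenceSubgroup (x : R) : Subgroup (GL n R) where
  carrier := {g | ∃ P : Matrix n n R, (g : Matrix n n R) = 1 + x • P}
  mul_mem' := by
    rintro g h ⟨P, hP⟩ ⟨Q, hQ⟩
    refine ⟨P + Q + x • (P * Q), ?_⟩
    rw [Units.val_mul, hP, hQ]
    simp only [add_mul, mul_add, one_mul, mul_one, smul_mul_smul_comm, smul_add, mul_smul]
    abel
  one_mem' := ⟨0, by simp⟩
  inv_mem' := by
    rintro g ⟨P, hP⟩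
    refine ⟨-((g⁻¹ : GL n R) * P), ?_⟩
    calc ((g⁻¹ : GL n R) : Matrix n n R) = (g⁻¹ : GL n R) * (g - x • P) := by
          rw [hP, add_sub_cancel_right, mul_one]
      _ = 1 + x • -((g⁻¹ : GL n R) * P) := by
          rw [mul_sub, ← Units.val_mul, inv_mul_cancel, Units.val_one, mul_smul_comm,
            smul_neg, sub_eq_add_neg]

lemma mem_congruenceSubgroup_of_dvd
    (hg : ∀ a b, x ∣ (g : Matrix n n R) a b - (1 : Matrix n n R) a b) :
    g ∈ congruenceSubgroup x := by
  obtain ⟨P, hP⟩ := exists_eq_smul_of_forall_dvd (M := (g : Matrix n n R) - 1) hg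
  exact ⟨P, by rw [← hP, add_sub_cancel]⟩

lemma dvd_sub_of_mem_congruenceSubgroup (h : GL n R) (hg : g ∈ congruenceSubgroup x) (a b : n) :
    x ∣ ((h * g : GL n R) : Matrix n n R) a b - (h : Matrix n n R) a b := by
  obtain ⟨P, hP⟩ := hg
  rw [Units.val_mul, hP, mul_add, mul_one, Matrix.add_apply, add_sub_cancel_left,
    mul_smul_comm, Matrix.smul_apply, smul_eq_mul]
  exact dvd_mul_right _ _

lemma congruenceSubgroup_mono (hxy : x ∣ y) :
    congruenceSubgroup (n := n) y ≤ congruenceSubgroup x := by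
  obtain ⟨z, rfl⟩ := hxy
  rintro g ⟨P, hP⟩
  exact ⟨z • P, by rw [hP, mul_smul]⟩

lemma conj_mem_congruenceSubgroup (h : GL n R) (hg : g ∈ congruenceSubgroup x) :
    h * g * h⁻¹ ∈ congruenceSubgroup x := by
  obtain ⟨P, hP⟩ := hg
  refine ⟨h * P * (h⁻¹ : GL n R), ?_⟩
  rw [Units.val_mul, Units.val_mul, hP, mul_add, add_mul, mul_one, ← Units.val_mul,
    mul_inv_cancel, Units.val_one, mul_smul_comm, smul_mul_assoc, Matrix.mul_assoc]

instance (x : R) : (congruenceSubgroup (n := n) x).Normal :=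
  ⟨fun _ hg h => conj_mem_congruenceSubgroup h hg⟩

lemma val_commutator_eq_one_add_smul {P Q : Matrix n n R} (hP : (g : Matrix n n R) = 1 + x • P)
    (hQ : (h : Matrix n n R) = 1 + y • Q) :
    (⁅g, h⁆ : GL n R) =
      (1 : Matrix n n R) + (x * y) • ((P * Q - Q * P) * (g⁻¹ * h⁻¹ : GL n R)) := by
  have hgh : (g : Matrix n n R) * h - h * g = (x * y) • (P * Q - Q * P) := by
    rw [hP, hQ]
    simp only [add_mul, mul_add, one_mul, mul_one, smul_mul_smul_comm, smul_sub, mul_comm y x]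
    abel
  have hinv : (h : Matrix n n R) * g * (g⁻¹ * h⁻¹ : GL n R) = 1 := by
    rw [← Units.val_mul, ← Units.val_mul, ← Units.val_one]
    congr 1
    group
  rw [← smul_mul_assoc, ← hgh, sub_mul, hinv, commutatorElement_def, mul_assoc (g * h),
    Units.val_mul, Units.val_mul, add_sub_cancel]

lemma commutator_mem_congruenceSubgroup (hg : g ∈ congruenceSubgroup x)
    (hh : h ∈ congruenceSubgroup y) : ⁅g, h⁆ ∈ congruenceSubgroup (x * y) := by
  obtain ⟨P, hP⟩ := hg
  obtain ⟨Q, hQ⟩ := hh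
  exact ⟨_, val_commutator_eq_one_add_smul hP hQ⟩

lemma sup_eq_top_of_det_ker_le {H K N : Subgroup (GL n R)} [N.Normal]
    (hdet : ∀ u : Rˣ, ∃ h ∈ H, ((h : GL n R) : Matrix n n R).det = (u : R)) (hKH : K ≤ H)
    (hK : GeneralLinearGroup.det.ker ≤ K ⊔ N) : H ⊔ N = ⊤ := by
  refine eq_top_iff.2 fun g _ => ?_
  obtain ⟨h, hh, hdg⟩ := hdet (GeneralLinearGroup.det g)
  have hker : h⁻¹ * g ∈ (GeneralLinearGroup.det (n := n) (R := R)).ker := by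
    rw [MonoidHom.mem_ker, map_mul, map_inv, inv_mul_eq_one]
    exact Units.ext (by rw [GeneralLinearGroup.val_det_apply, hdg])
  obtain ⟨y, hy, z, hz, hyz⟩ := Subgroup.mem_sup_of_normal_right.1 (hK hker)
  refine Subgroup.mem_sup_of_normal_right.2 ⟨h * y, mul_mem hh (hKH hy), z, hz, ?_⟩
  rw [mul_assoc, hyz, mul_inv_cancel_left]

end Congruence

section Level

variable {n R : Type*} [Fintype n] [DecidableEq n] [CommRing R] {i j : ℕ} {g h : GL n R⟦X⟧}

noncomputable def level (i : ℕ) (g : GL n R⟦X⟧) : Matrix n n R :=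
  ((g : Matrix n n R⟦X⟧) - 1).map (coeff i)

lemma level_eq_of_eq {P : Matrix n n R⟦X⟧}
    (hP : (g : Matrix n n R⟦X⟧) = 1 + (X : R⟦X⟧) ^ i • P) :
    level i g = constantCoeff.mapMatrix P := by
  ext a b
  simpa [level, hP] using coeff_X_pow_mul (P a b) i 0

@[simp]
lemma level_one : level i (1 : GL n R⟦X⟧) = 0 := by
  simp [level]

lemma mapMatrix_constantCoeff_X_pow_smul (hi : 1 ≤ i) (P : Matrix n n R⟦X⟧) :
    constantCoeff.mapMatrix ((X : R⟦X⟧) ^ i • P) = 0 := by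
  ext a b
  simp [zero_pow (by omega : i ≠ 0)]

lemma exists_eq_X_smul {M : Matrix n n R⟦X⟧} (hM : constantCoeff.mapMatrix M = 0) :
    ∃ P : Matrix n n R⟦X⟧, M = (X : R⟦X⟧) • P :=
  exists_eq_smul_of_forall_dvd fun a b => X_dvd_iff.2 (by simpa using congr_fun₂ hM a b)

lemma mapMatrix_constantCoeff_eq_one (hi : 1 ≤ i)
    (hg : g ∈ congruenceSubgroup ((X : R⟦X⟧) ^ i)) :
    constantCoeff.mapMatrix (g : Matrix n n R⟦X⟧) = 1 := by
  obtain ⟨P, hP⟩ := hg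
  rw [hP, map_add, mapMatrix_constantCoeff_X_pow_smul hi, add_zero, map_one]

lemma mem_congruenceSubgroup_X_of_map_eq_one
    (hg : GeneralLinearGroup.map constantCoeff g = 1) :
    g ∈ congruenceSubgroup (X : R⟦X⟧) := by
  obtain ⟨P, hP⟩ := exists_eq_X_smul (M := (g : Matrix n n R⟦X⟧) - 1) (by
    rw [map_sub, map_one, sub_eq_zero]
    exact congrArg Units.val hg)
  exact ⟨P, by rw [← hP, add_sub_cancel]⟩

lemma level_mul (hi : 1 ≤ i) (hg : g ∈ congruenceSubgroup ((X : R⟦X⟧) ^ i))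
    (hh : h ∈ congruenceSubgroup ((X : R⟦X⟧) ^ i)) :
    level i (g * h) = level i g + level i h := by
  obtain ⟨P, hP⟩ := hg
  obtain ⟨Q, hQ⟩ := hh
  have hgh : ((g * h : GL n R⟦X⟧) : Matrix n n R⟦X⟧) =
      1 + (X : R⟦X⟧) ^ i • (P + Q + (X : R⟦X⟧) ^ i • (P * Q)) := by
    rw [Units.val_mul, hP, hQ]
    simp only [add_mul, mul_add, one_mul, mul_one, smul_mul_smul_comm, smul_add, mul_smul]
    abel
  rw [level_eq_of_eq hgh, level_eq_of_eq hP, level_eq_of_eq hQ, map_add, map_add,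
    mapMatrix_constantCoeff_X_pow_smul hi, add_zero]

lemma level_inv (hi : 1 ≤ i) (hg : g ∈ congruenceSubgroup ((X : R⟦X⟧) ^ i)) :
    level i g⁻¹ = -level i g := by
  rw [eq_neg_iff_add_eq_zero, ← level_mul hi (inv_mem hg) hg, inv_mul_cancel, level_one]

lemma level_conj (x : GL n R⟦X⟧) (hg : g ∈ congruenceSubgroup ((X : R⟦X⟧) ^ i)) :
    level i (x * g * x⁻¹) = (GeneralLinearGroup.map constantCoeff x : Matrix n n R) *
      level i g * ((GeneralLinearGroup.map constantCoeff x)⁻¹ : GL n R) := by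
  obtain ⟨P, hP⟩ := hg
  have hconj : ((x * g * x⁻¹ : GL n R⟦X⟧) : Matrix n n R⟦X⟧) =
      1 + (X : R⟦X⟧) ^ i • (x * P * (x⁻¹ : GL n R⟦X⟧)) := by
    rw [Units.val_mul, Units.val_mul, hP, mul_add, add_mul, mul_one, ← Units.val_mul,
      mul_inv_cancel, Units.val_one, mul_smul_comm, smul_mul_assoc, Matrix.mul_assoc]
  rw [level_eq_of_eq hconj, level_eq_of_eq hP, ← map_inv, map_mul, map_mul]
  rfl

lemma level_commutator (hi : 1 ≤ i) (hj : 1 ≤ j)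
    (hg : g ∈ congruenceSubgroup ((X : R⟦X⟧) ^ i))
    (hh : h ∈ congruenceSubgroup ((X : R⟦X⟧) ^ j)) :
    level (i + j) ⁅g, h⁆ = level i g * level j h - level j h * level i g := by
  obtain ⟨P, hP⟩ := id hg
  obtain ⟨Q, hQ⟩ := id hh
  have hc := val_commutator_eq_one_add_smul hP hQ
  rw [← pow_add] at hc
  have h1 : g⁻¹ * h⁻¹ ∈ congruenceSubgroup ((X : R⟦X⟧) ^ 1) :=
    mul_mem (congruenceSubgroup_mono (pow_dvd_pow X hi) (inv_mem hg))
      (congruenceSubgroup_mono (pow_dvd_pow X hj) (inv_mem hh))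
  rw [level_eq_of_eq hc, level_eq_of_eq hP, level_eq_of_eq hQ, map_mul,
    mapMatrix_constantCoeff_eq_one le_rfl h1, mul_one, map_sub, map_mul, map_mul]

lemma level_eq_zero_of_mem (hg : g ∈ congruenceSubgroup ((X : R⟦X⟧) ^ (i + 1))) :
    level i g = 0 := by
  obtain ⟨P, hP⟩ := hg
  rw [pow_succ, mul_smul] at hP
  rw [level_eq_of_eq hP, ← pow_one (X : R⟦X⟧), mapMatrix_constantCoeff_X_pow_smul le_rfl]

lemma mem_of_level_eq_zero (hg : g ∈ congruenceSubgroup ((X : R⟦X⟧) ^ i))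
    (h0 : level i g = 0) : g ∈ congruenceSubgroup ((X : R⟦X⟧) ^ (i + 1)) := by
  obtain ⟨P, hP⟩ := hg
  obtain ⟨Q, rfl⟩ := exists_eq_X_smul (h0 ▸ (level_eq_of_eq hP).symm)
  exact ⟨Q, by rw [hP, pow_succ, mul_smul]⟩

lemma exists_level_eq (hi : 1 ≤ i) (A : Matrix n n R) :
    ∃ g ∈ congruenceSubgroup ((X : R⟦X⟧) ^ i), level i g = A := by
  set M : Matrix n n R⟦X⟧ := 1 + (X : R⟦X⟧) ^ i • (C : R →+* R⟦X⟧).mapMatrix A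
    with hM
  have hunit : IsUnit M := by
    rw [isUnit_iff_isUnit_det, isUnit_iff_constantCoeff, RingHom.map_det, hM, map_add,
      mapMatrix_constantCoeff_X_pow_smul hi, add_zero, map_one, det_one]
    exact isUnit_one
  refine ⟨hunit.unit, ⟨_, hunit.unit_spec⟩, ?_⟩
  rw [level_eq_of_eq hunit.unit_spec]
  ext a b
  simp

lemma trace_level_eq_zero (hi : 1 ≤ i) {g : GL (Fin 2) R⟦X⟧}
    (hg : g ∈ congruenceSubgroup ((X : R⟦X⟧) ^ i)) (hdet : GeneralLinearGroup.det g = 1) :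
    (level i g).trace = 0 := by
  obtain ⟨P, hP⟩ := hg
  have hdet' : (g : Matrix (Fin 2) (Fin 2) R⟦X⟧).det = 1 := by
    rw [← GeneralLinearGroup.val_det_apply, hdet, Units.val_one]
  -- `det (1 + Xⁱ P) = 1 + Xⁱ tr P + X²ⁱ det P`; compare the coefficients of `Xⁱ`
  have h : (X : R⟦X⟧) ^ i * P.trace + (X : R⟦X⟧) ^ (i + i) * P.det = 0 := by
    rw [hP, det_fin_two] at hdet'
    rw [trace_fin_two, det_fin_two, pow_add]
    simp only [Matrix.add_apply, Matrix.smul_apply, smul_eq_mul, one_apply_eq,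
      one_apply_ne zero_ne_one, one_apply_ne one_ne_zero] at hdet'
    linear_combination hdet'
  have hcoeff := congrArg (coeff i) h
  rw [map_add, coeff_X_pow_mul', coeff_X_pow_mul', if_pos le_rfl, if_neg (by omega), add_zero,
    Nat.sub_self, coeff_zero_eq_constantCoeff, map_zero] at hcoeff
  rw [level_eq_of_eq hP, trace_fin_two]
  simpa [trace_fin_two] using hcoeff

lemma level_notMem_range_scalar (hg : g ∈ congruenceSubgroup (X : R⟦X⟧))
    (hns : ¬∃ c : R⟦X⟧, ∀ a b : n,
      (X : R⟦X⟧) ^ 2 ∣ (g : Matrix n n R⟦X⟧) a b - scalar n (1 + X * c) a b) :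
    level 1 g ∉ Set.range (scalar n) := by
  rintro ⟨r, hr⟩
  obtain ⟨P, hP⟩ := hg
  rw [← pow_one (X : R⟦X⟧)] at hP
  obtain ⟨Q, hQ⟩ := exists_eq_X_smul (M := P - scalar n (C r)) (by
    rw [map_sub, ← level_eq_of_eq hP, ← hr, sub_eq_zero]
    ext a b
    by_cases hab : a = b <;> simp [hab])
  refine hns ⟨C r, fun a b => ⟨Q a b, ?_⟩⟩
  have hab := congr_fun₂ hQ a b
  simp only [hP, Matrix.sub_apply, Matrix.add_apply, Matrix.smul_apply, smul_eq_mul,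
    scalar_apply, diagonal_apply, one_apply, pow_one] at hab ⊢
  split_ifs at hab ⊢ <;> linear_combination X * hab

lemma le_sup_congruenceSubgroup_X {S K : Subgroup (GL n R⟦X⟧)}
    (hSK : ∀ g ∈ S, ∃ h ∈ K,
      GeneralLinearGroup.map constantCoeff h = GeneralLinearGroup.map constantCoeff g) :
    S ≤ K ⊔ congruenceSubgroup (X : R⟦X⟧) := by
  intro g hg
  obtain ⟨h, hh, hhg⟩ := hSK g hg
  refine Subgroup.mem_sup_of_normal_right.2 ⟨h, hh, h⁻¹ * g, ?_, mul_inv_cancel_left h g⟩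
  exact mem_congruenceSubgroup_X_of_map_eq_one (by rw [map_mul, map_inv, hhg, inv_mul_cancel])

end Level

section LevelAlgebra

variable {n R : Type*} [Fintype n] [DecidableEq n] [CommRing R] {i j : ℕ}
  {H K L : Subgroup (GL n R⟦X⟧)} {A B : Matrix n n R}

/-- The paper's `K^[i]`. -/
def levelAlgebra (K : Subgroup (GL n R⟦X⟧)) (hi : 1 ≤ i) : AddSubgroup (Matrix n n R) where
  carrier := {A | ∃ g ∈ K, g ∈ congruenceSubgroup ((X : R⟦X⟧) ^ i) ∧ level i g = A}
  add_mem' := by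
    rintro _ _ ⟨g, hgK, hg, rfl⟩ ⟨h, hhK, hh, rfl⟩
    exact ⟨g * h, mul_mem hgK hhK, mul_mem hg hh, level_mul hi hg hh⟩
  zero_mem' := ⟨1, one_mem _, one_mem _, level_one⟩
  neg_mem' := by
    rintro _ ⟨g, hgK, hg, rfl⟩
    exact ⟨g⁻¹, inv_mem hgK, inv_mem hg, level_inv hi hg⟩

lemma levelAlgebra_mono (hi : 1 ≤ i) (hKL : K ≤ L) :
    levelAlgebra K hi ≤ levelAlgebra L hi := by
  rintro _ ⟨g, hgK, hg, rfl⟩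
  exact ⟨g, hKL hgK, hg, rfl⟩

lemma conj_mem_levelAlgebra (hi : 1 ≤ i)
    (hred : ∀ m : GL n R, ∃ h ∈ H, GeneralLinearGroup.map constantCoeff h = m)
    (hK : ∀ x ∈ H, ∀ g ∈ K, x * g * x⁻¹ ∈ K) :
    ∀ (y : GL n R), ∀ A ∈ levelAlgebra K hi,
      (y : Matrix n n R) * A * (y⁻¹ : GL n R) ∈ levelAlgebra K hi := by
  rintro y _ ⟨g, hgK, hg, rfl⟩
  obtain ⟨x, hx, rfl⟩ := hred y
  exact ⟨x * g * x⁻¹, hK x hx g hgK, conj_mem_congruenceSubgroup x hg, level_conj x hg⟩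

lemma lie_mem_levelAlgebra_commutator (hi : 1 ≤ i) (hj : 1 ≤ j) (hA : A ∈ levelAlgebra K hi)
    (hB : B ∈ levelAlgebra L hj) :
    A * B - B * A ∈ levelAlgebra ⁅K, L⁆ (le_add_right hi : 1 ≤ i + j) := by
  obtain ⟨g, hgK, hg, rfl⟩ := hA
  obtain ⟨h, hhL, hh, rfl⟩ := hB
  refine ⟨⁅g, h⁆, Subgroup.commutator_mem_commutator hgK hhL, ?_,
    level_commutator hi hj hg hh⟩
  rw [pow_add]
  exact commutator_mem_congruenceSubgroup hg hh

lemma conj_sub_mem_levelAlgebra_commutator (hi : 1 ≤ i) {x : GL n R⟦X⟧} (hx : x ∈ K)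
    (hA : A ∈ levelAlgebra L hi) :
    (GeneralLinearGroup.map constantCoeff x : Matrix n n R) * A *
      ((GeneralLinearGroup.map constantCoeff x)⁻¹ : GL n R) - A ∈
        levelAlgebra ⁅K, L⁆ hi := by
  obtain ⟨g, hgL, hg, rfl⟩ := hA
  have hxg := conj_mem_congruenceSubgroup x hg
  refine ⟨⁅x, g⁆, Subgroup.commutator_mem_commutator hx hgL, mul_mem hxg (inv_mem hg), ?_⟩
  rw [commutatorElement_def, level_mul hi hxg (inv_mem hg), level_conj x hg, level_inv hi hg,
    sub_eq_add_neg]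

lemma levelAlgebra_eq_top (hi : 1 ≤ i)
    (hH : H ⊔ congruenceSubgroup ((X : R⟦X⟧) ^ (i + 1)) = ⊤) : levelAlgebra H hi = ⊤ := by
  refine eq_top_iff.2 fun A _ => ?_
  obtain ⟨g, hg, rfl⟩ := exists_level_eq (n := n) hi A
  obtain ⟨h, hh, c, hc, rfl⟩ := Subgroup.mem_sup_of_normal_right.1 (hH ▸ Subgroup.mem_top g)
  have hc' := congruenceSubgroup_mono (pow_dvd_pow X i.le_succ) hc
  have hh' : h ∈ congruenceSubgroup ((X : R⟦X⟧) ^ i) := by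
    simpa using mul_mem hg (inv_mem hc')
  refine ⟨h, hh, hh', ?_⟩
  rw [level_mul hi hh' hc', level_eq_zero_of_mem hc, add_zero]

lemma le_sup_congruenceSubgroup_succ (hi : 1 ≤ i) {K : Subgroup (GL (Fin 2) R⟦X⟧)}
    (hK : K ≤ GeneralLinearGroup.det.ker)
    (hsl : ∀ A : Matrix (Fin 2) (Fin 2) R, A.trace = 0 → A ∈ levelAlgebra K hi)
    (hKi : GeneralLinearGroup.det.ker ≤ K ⊔ congruenceSubgroup ((X : R⟦X⟧) ^ i)) :
    GeneralLinearGroup.det.ker ≤ K ⊔ congruenceSubgroup ((X : R⟦X⟧) ^ (i + 1)) := by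
  intro g hg
  obtain ⟨y, hy, c, hc, rfl⟩ := Subgroup.mem_sup_of_normal_right.1 (hKi hg)
  have hcdet : GeneralLinearGroup.det c = 1 := by
    simpa using mul_mem (inv_mem (hK hy)) hg
  obtain ⟨e, he, hei, hec⟩ := hsl (level i c) (trace_level_eq_zero hi hc hcdet)
  refine Subgroup.mem_sup_of_normal_right.2 ⟨y * e, mul_mem hy he, e⁻¹ * c, ?_, by group⟩
  refine mem_of_level_eq_zero (mul_mem (inv_mem hei) hc) ?_
  rw [level_mul hi (inv_mem hei) hc, level_inv hi hei, hec, neg_add_cancel]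

lemma det_ker_le_sup_congruenceSubgroup {K : Subgroup (GL (Fin 2) R⟦X⟧)}
    (hK : K ≤ GeneralLinearGroup.det.ker)
    (hsl : ∀ i (hi : 1 ≤ i), ∀ A : Matrix (Fin 2) (Fin 2) R, A.trace = 0 → A ∈ levelAlgebra K hi)
    (hK1 : GeneralLinearGroup.det.ker ≤ K ⊔ congruenceSubgroup (X : R⟦X⟧)) (i : ℕ) :
    GeneralLinearGroup.det.ker ≤ K ⊔ congruenceSubgroup ((X : R⟦X⟧) ^ (i + 1)) := by
  induction i with
  | zero => rwa [zero_add, pow_one]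
  | succ i ih => exact le_sup_congruenceSubgroup_succ (by omega) hK (hsl _ _) ih

end LevelAlgebra

section TwoByTwo

variable {k : Type*} [Field k] [Fintype k]

lemma exists_ne_zero_sq_ne_one (hk : 3 < Fintype.card k) : ∃ a : k, a ≠ 0 ∧ a ^ 2 ≠ 1 := by
  classical
  obtain ⟨a, ha⟩ := exists_notMem_of_card_lt {0, 1, -1} (Finset.card_le_three.trans_lt hk)
  simp only [Finset.mem_insert, Finset.mem_singleton, not_or] at ha
  exact ⟨a, ha.1, by rw [ne_eq, sq_eq_one_iff]; tauto⟩

lemma exists_mem_commutator_map_eq {G : Type*} [Group G] (hk : 3 < Fintype.card k)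
    {H : Subgroup G} {f : G →* GL (Fin 2) k} (hf : ∀ m, ∃ h ∈ H, f h = m) {m : GL (Fin 2) k}
    (hm : GeneralLinearGroup.det m = 1) : ∃ h ∈ ⁅H, H⁆, f h = m := by
  obtain ⟨a, ha0, ha1⟩ := exists_ne_zero_sq_ne_one hk
  have hH : H.map f = ⊤ := eq_top_iff.2 fun m _ => hf m
  let s : SpecialLinearGroup (Fin 2) k :=
    ⟨m, by rw [← GeneralLinearGroup.val_det_apply, hm, Units.val_one]⟩
  rw [← Subgroup.mem_map, Subgroup.map_commutator, hH]
  have hs := Subgroup.mem_map_of_mem SpecialLinearGroup.toGL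
    (SL2.commutator_eq_top ha0 ha1 ▸ Subgroup.mem_top s)
  rw [commutator_def, Subgroup.map_commutator] at hs
  exact Subgroup.commutator_mono le_top le_top
    ((Units.ext rfl : SpecialLinearGroup.toGL s = m) ▸ hs)

variable {V : AddSubgroup (Matrix (Fin 2) (Fin 2) k)}

omit [Fintype k] in
lemma conj_mem_of_mul_eq_one
    (hV : ∀ (y : GL (Fin 2) k), ∀ A ∈ V,
      (y : Matrix (Fin 2) (Fin 2) k) * A * (y⁻¹ : GL (Fin 2) k) ∈ V)
    {g g' A : Matrix (Fin 2) (Fin 2) k} (h : g * g' = 1) (hA : A ∈ V) : g * A * g' ∈ V :=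
  hV ⟨g, g', h, mul_eq_one_comm.mp h⟩ A hA

omit [Fintype k] in
lemma upper_notMem_range_scalar {w : k} (hw : w ≠ 0) :
    !![0, w; 0, 0] ∉ Set.range (scalar (Fin 2)) := by
  rintro ⟨c, hc⟩
  exact hw (by simpa using (congr_fun₂ hc 0 1).symm)

lemma exists_mem_upperTriangular_of_notMem_range_scalar (hk : 2 < Fintype.card k)
    (hV : ∀ (y : GL (Fin 2) k), ∀ A ∈ V,
      (y : Matrix (Fin 2) (Fin 2) k) * A * (y⁻¹ : GL (Fin 2) k) ∈ V)
    {A : Matrix (Fin 2) (Fin 2) k} (hA : A ∈ V) (hAs : A ∉ Set.range (scalar (Fin 2))) :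
    ∃ P ∈ V, P 1 0 = 0 ∧ P 0 1 ≠ 0 := by
  classical
  obtain ⟨a, b, c, d, rfl⟩ : ∃ a b c d, A = !![a, b; c, d] := ⟨_, _, _, _, eta_fin_two A⟩
  by_cases hcb : c = 0 ∧ b ≠ 0
  · exact ⟨_, hA, by simp [hcb.1], by simpa using hcb.2⟩
  -- otherwise conjugate by `!![1, x; 0, 1]` and subtract; the upper right entry becomes
  -- `x (d - a - x c)`
  obtain ⟨x, hx⟩ : ∃ x : k, x * (d - a - x * c) ≠ 0 := by
    by_cases hc : c = 0
    · obtain rfl : b = 0 := by tauto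
      subst hc
      have had : d ≠ a := fun had =>
        hAs ⟨a, by ext i j; fin_cases i <;> fin_cases j <;> simp [had]⟩
      exact ⟨1, by simpa [sub_eq_zero] using had⟩
    · obtain ⟨x, hx⟩ :=
        exists_notMem_of_card_lt {0, (d - a) / c} (Finset.card_le_two.trans_lt hk)
      simp only [Finset.mem_insert, Finset.mem_singleton, not_or] at hx
      refine ⟨x, mul_ne_zero hx.1 fun h => hx.2 ?_⟩
      field_simp
      linear_combination -h
  refine ⟨!![1, x; 0, 1] * !![a, b; c, d] * !![1, -x; 0, 1] - !![a, b; c, d],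
    sub_mem (conj_mem_of_mul_eq_one hV (by simp [one_fin_two]) hA) hA, by simp, ?_⟩
  convert hx using 1
  simp
  ring

lemma mem_of_trace_eq_zero_of_conj_mem (hk : 2 < Fintype.card k)
    (hV : ∀ (y : GL (Fin 2) k), ∀ A ∈ V,
      (y : Matrix (Fin 2) (Fin 2) k) * A * (y⁻¹ : GL (Fin 2) k) ∈ V)
    {A : Matrix (Fin 2) (Fin 2) k} (hA : A ∈ V) (hAs : A ∉ Set.range (scalar (Fin 2)))
    {B : Matrix (Fin 2) (Fin 2) k} (hB : B.trace = 0) : B ∈ V := by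
  classical
  obtain ⟨P, hPV, hP10, hP01⟩ := exists_mem_upperTriangular_of_notMem_range_scalar hk hV hA hAs
  obtain ⟨u, hu⟩ := exists_notMem_of_card_lt {0, 1} (Finset.card_le_two.trans_lt hk)
  simp only [Finset.mem_insert, Finset.mem_singleton, not_or] at hu
  have hdiag : ∀ t : k, t ≠ 0 → ∀ P ∈ V, !![t, 0; 0, 1] * P * !![t⁻¹, 0; 0, 1] ∈ V :=
    fun t ht P => conj_mem_of_mul_eq_one hV (by simp [ht, one_fin_two])
  have hE01 : ∀ w : k, !![0, w; 0, 0] ∈ V := by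
    have hz : !![(0 : k), (u - 1) * P 0 1; 0, 0] ∈ V := by
      convert sub_mem (hdiag u hu.1 P hPV) hPV using 1
      rw [eta_fin_two P, hP10]
      simp [sub_one_mul, mul_right_comm u, hu.1]
    have hz0 : (u - 1) * P 0 1 ≠ 0 := mul_ne_zero (sub_ne_zero.2 hu.2) hP01
    intro w
    rcases eq_or_ne w 0 with rfl | hw
    · simpa using eta_fin_two (0 : Matrix (Fin 2) (Fin 2) k) ▸ V.zero_mem
    · convert hdiag (w / ((u - 1) * P 0 1)) (div_ne_zero hw hz0) _ hz using 1
      simp [hz0]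
  have hE10 : ∀ w : k, !![0, 0; w, 0] ∈ V := fun w => by
    convert conj_mem_of_mul_eq_one hV (g := !![0, 1; 1, 0]) (g' := !![0, 1; 1, 0])
      (by simp [one_fin_two]) (hE01 w) using 1
    simp
  obtain ⟨p, q, r, s, rfl⟩ : ∃ p q r s, B = !![p, q; r, s] := ⟨_, _, _, _, eta_fin_two B⟩
  have hs : s = -p := by
    simp [trace_fin_two] at hB
    linear_combination hB
  convert add_mem (add_mem (conj_mem_of_mul_eq_one hV (g := !![1, 0; 1, 1])
    (g' := !![1, 0; -1, 1]) (by simp [one_fin_two]) (hE01 (-p))) (hE01 (q + p))) (hE10 (r - p))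
    using 1
  simp [hs]

end TwoByTwo

section SL2

variable {k : Type*} [Field k] [Fintype k] {H K : Subgroup (GL (Fin 2) k⟦X⟧)}

lemma det_ker_le_sup_congruenceSubgroup_X (hk : 3 < Fintype.card k)
    (hred : ∀ m : GL (Fin 2) k, ∃ h ∈ H, GeneralLinearGroup.map constantCoeff h = m)
    (hHK : ⁅H, H⁆ ≤ K) :
    GeneralLinearGroup.det.ker ≤ K ⊔ congruenceSubgroup (X : k⟦X⟧) := by
  refine le_sup_congruenceSubgroup_X fun g hg => ?_
  obtain ⟨h, hh, hhg⟩ := exists_mem_commutator_map_eq hk hred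
    (m := GeneralLinearGroup.map constantCoeff g)
    (by rw [GeneralLinearGroup.map_det, MonoidHom.mem_ker.1 hg, map_one])
  exact ⟨h, hHK hh, hhg⟩

lemma trace_zero_mem_levelAlgebra_one (hk : 2 < Fintype.card k)
    (hred : ∀ m : GL (Fin 2) k, ∃ h ∈ H, GeneralLinearGroup.map constantCoeff h = m)
    (hHK : ⁅H, H⁆ ≤ K) (hK : ∀ x ∈ H, ∀ g ∈ K, x * g * x⁻¹ ∈ K)
    {A : Matrix (Fin 2) (Fin 2) k} (hA : A ∈ levelAlgebra H le_rfl)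
    (hAs : A ∉ Set.range (scalar (Fin 2))) :
    ∀ B : Matrix (Fin 2) (Fin 2) k, B.trace = 0 → B ∈ levelAlgebra K le_rfl := by
  classical
  have hE : !![0, 1; 0, 0] ∈ levelAlgebra H le_rfl :=
    mem_of_trace_eq_zero_of_conj_mem hk
      (conj_mem_levelAlgebra le_rfl hred fun x hx g hg => mul_mem (mul_mem hx hg) (inv_mem hx))
      hA hAs (by simp)
  obtain ⟨u, hu⟩ := exists_notMem_of_card_lt {0, 1} (Finset.card_le_two.trans_lt hk)
  simp only [Finset.mem_insert, Finset.mem_singleton, not_or] at hu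
  obtain ⟨x, hx, hxd⟩ := hred
    ⟨!![u, 0; 0, 1], !![u⁻¹, 0; 0, 1], by simp [hu.1, one_fin_two], by simp [hu.1, one_fin_two]⟩
  have hdE := levelAlgebra_mono le_rfl hHK (conj_sub_mem_levelAlgebra_commutator le_rfl hx hE)
  rw [hxd] at hdE
  intro B hB
  refine mem_of_trace_eq_zero_of_conj_mem hk (conj_mem_levelAlgebra le_rfl hred hK) hdE ?_ hB
  convert upper_notMem_range_scalar (sub_ne_zero.2 hu.2) using 2
  simp

lemma trace_zero_mem_levelAlgebra (hk : 2 < Fintype.card k)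
    (hred : ∀ m : GL (Fin 2) k, ∃ h ∈ H, GeneralLinearGroup.map constantCoeff h = m)
    (hHK : ⁅H, H⁆ ≤ K) (hK : ∀ x ∈ H, ∀ g ∈ K, x * g * x⁻¹ ∈ K) (hKH : K ≤ H)
    (h00 : !![1, 0; 0, 0] ∈ levelAlgebra H le_rfl)
    (h1 : ∀ B : Matrix (Fin 2) (Fin 2) k, B.trace = 0 → B ∈ levelAlgebra K le_rfl)
    {i : ℕ} (hi : 1 ≤ i) :
    ∀ B : Matrix (Fin 2) (Fin 2) k, B.trace = 0 → B ∈ levelAlgebra K hi := by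
  induction i, hi using Nat.le_induction with
  | base => exact h1
  | succ i hi ih =>
    have hE : !![0, 1; 0, 0] ∈ levelAlgebra H hi := levelAlgebra_mono hi hKH (ih _ (by simp))
    have hbr := levelAlgebra_mono _ hHK (lie_mem_levelAlgebra_commutator hi le_rfl hE h00)
    intro B hB
    refine mem_of_trace_eq_zero_of_conj_mem hk (conj_mem_levelAlgebra _ hred hK) hbr ?_ hB
    convert upper_notMem_range_scalar (neg_ne_zero.2 (one_ne_zero (α := k))) using 2
    ext a b
    fin_cases a <;> fin_cases b <;> simp

end SL2

/-- (Pink–Rütsche)  Model the completion `A_𝔭 ≅ F_{q^n}[[X]]` of `A = F_q[T]` at a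
maximal ideal `𝔭` of degree `n` as the power series ring over the residue field `k`
with `#k = q^n`.  Let `H` be a closed subgroup of `GL₂(k[[X]])` such that
(i) the reduction of `H` modulo `𝔭 = (X)` is all of `GL₂(k)`,
(ii) `det H = k[[X]]ˣ`, and
(iii) the image of `H ∩ (Id + X·M₂)` modulo `Id + X²·M₂` contains a non-scalar
element.  If `q ≥ 4`, then `H = GL₂(k[[X]])`. -/
theorem stmt_16 (q n : ℕ) (hq : 4 ≤ q) (hn : 1 ≤ n)
    (k : Type*) [Field k] [Fintype k] (hk : Fintype.card k = q ^ n)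
    (H : Subgroup (GL (Fin 2) (PowerSeries k)))
    (hclosed : ∀ g : GL (Fin 2) (PowerSeries k),
      (∀ i : ℕ, ∃ h ∈ H, ∀ a b : Fin 2,
        (X : PowerSeries k) ^ i ∣
          ((g : Matrix (Fin 2) (Fin 2) (PowerSeries k)) a b -
            (h : Matrix (Fin 2) (Fin 2) (PowerSeries k)) a b)) → g ∈ H)
    (hred : ∀ m : GL (Fin 2) k, ∃ h ∈ H,
      Matrix.GeneralLinearGroup.map (constantCoeff : PowerSeries k →+* k) h = m)
    (hdet : ∀ u : (PowerSeries k)ˣ, ∃ h ∈ H,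
      ((h : GL (Fin 2) (PowerSeries k)) : Matrix (Fin 2) (Fin 2) (PowerSeries k)).det
        = (u : PowerSeries k))
    (hnonscalar : ∃ h ∈ H,
      (∀ a b : Fin 2, (X : PowerSeries k) ∣
        ((h : Matrix (Fin 2) (Fin 2) (PowerSeries k)) a b -
          (1 : Matrix (Fin 2) (Fin 2) (PowerSeries k)) a b)) ∧
      ¬ ∃ c : PowerSeries k, ∀ a b : Fin 2,
        (X : PowerSeries k) ^ 2 ∣
          ((h : Matrix (Fin 2) (Fin 2) (PowerSeries k)) a b -
            (Matrix.scalar (Fin 2) (1 + X * c)) a b)) :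
    H = ⊤ := by
  have hk4 : 3 < Fintype.card k := hk ▸ hq.trans (Nat.le_self_pow (by omega) q)
  set K := H ⊓ GeneralLinearGroup.det.ker
  have hKH : K ≤ H := inf_le_left
  have hHK : ⁅H, H⁆ ≤ K := le_inf H.commutator_le_self
    ((Subgroup.commutator_mono le_top le_top).trans (Abelianization.commutator_subset_ker _))
  have hK : ∀ x ∈ H, ∀ g ∈ K, x * g * x⁻¹ ∈ K := fun x hx g hg =>
    Subgroup.mem_inf.2 ⟨mul_mem (mul_mem hx (hKH hg)) (inv_mem hx),
      (MonoidHom.normal_ker _).conj_mem g (Subgroup.mem_inf.1 hg).2 x⟩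
  have hK1 := det_ker_le_sup_congruenceSubgroup_X hk4 hred hHK
  obtain ⟨g, hgH, hg1, hgs⟩ := hnonscalar
  have hg := mem_congruenceSubgroup_of_dvd hg1
  have hV1 := trace_zero_mem_levelAlgebra_one (by omega) hred hHK hK
    ⟨g, hgH, (pow_one (X : k⟦X⟧)).symm ▸ hg, rfl⟩ (level_notMem_range_scalar hg hgs)
  have hH2 := sup_eq_top_of_det_ker_le hdet hKH
    (le_sup_congruenceSubgroup_succ le_rfl inf_le_right hV1 ((pow_one (X : k⟦X⟧)).symm ▸ hK1))
  have h00 : !![(1 : k), 0; 0, 0] ∈ levelAlgebra H le_rfl :=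
    (levelAlgebra_eq_top le_rfl hH2).ge (AddSubgroup.mem_top _)
  have hSL := det_ker_le_sup_congruenceSubgroup inf_le_right
    (fun _ => trace_zero_mem_levelAlgebra (by omega) hred hHK hK hKH h00 hV1) hK1
  refine eq_top_iff.2 fun g _ => hclosed g fun i => ?_
  obtain ⟨h, hh, c, hc, rfl⟩ := Subgroup.mem_sup_of_normal_right.1
    ((sup_eq_top_of_det_ker_le hdet hKH (hSL i)).ge (Subgroup.mem_top g))
  exact ⟨h, hh, fun a b =>
    (pow_dvd_pow X i.le_succ).trans (dvd_sub_of_mem_congruenceSubgroup h hc a b)⟩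
end
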